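/- Let p be an odd prime and G = GL₂(F_p) with Borel subgroup B, and U₁ (resp. U₂) the index-2 subgroup of B where the top-left (resp. bottom-right) entry is a nonzero square. Then the complex permutation representations C[G/U₁] and C[G/U₂] are isomorphic as G-representations. -/

import Mathlib

open Matrix

section

variable (p : ℕ) [Fact p.Prime]

local notation "M2" => Matrix (Fin 2) (Fin 2) (ZMod p)

private lemma det_isUnit (a : GL (Fin 2) (ZMod p)) : IsUnit (a : M2).det :=
  isUnit_iff_exists_inv.2 ⟨(a⁻¹ : GL (Fin 2) (ZMod p)).val.det,
    by rw [← det_mul, ← Units.val_mul, mul_inv_cancel]; simp⟩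

private lemma mul_entry (a b : GL (Fin 2) (ZMod p)) (i j : Fin 2) :
    ((a * b : GL (Fin 2) (ZMod p)) : M2) i j =
      (a : M2) i 0 * (b : M2) 0 j + (a : M2) i 1 * (b : M2) 1 j := by
  rw [Units.val_mul, Matrix.mul_apply, Fin.sum_univ_two]

private lemma inv_entries (a : GL (Fin 2) (ZMod p)) (ha1 : (a : M2) 1 0 = 0) :
    ((a⁻¹ : GL (Fin 2) (ZMod p)) : M2) 1 0 = 0 ∧
      ((a⁻¹ : GL (Fin 2) (ZMod p)) : M2) 0 0 = ((a : M2) 0 0)⁻¹ ∧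
      ((a⁻¹ : GL (Fin 2) (ZMod p)) : M2) 1 1 = ((a : M2) 1 1)⁻¹ := by
  have hdetu := det_isUnit p a
  have hdet : (a : M2).det = (a : M2) 0 0 * (a : M2) 1 1 := by
    rw [det_fin_two, ha1]; ring
  rw [hdet] at hdetu
  have h00 : (a : M2) 0 0 ≠ 0 := fun h => by rw [h, zero_mul] at hdetu; simp at hdetu
  have h11 : (a : M2) 1 1 ≠ 0 := fun h => by rw [h, mul_zero] at hdetu; simp at hdetu
  have hcoe : ((a⁻¹ : GL (Fin 2) (ZMod p)) : M2) = (a : M2)⁻¹ := coe_units_inv a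
  rw [hcoe, inv_def, hdet]
  refine ⟨by simp [adjugate_fin_two, ha1], ?_, ?_⟩ <;>
  · simp [adjugate_fin_two, Ring.inverse_eq_inv', mul_inv]
    field_simp
    try ring

/-- The index-2 subgroup `U₁` of the Borel subgroup of `GL₂(𝔽_p)`: invertible upper
triangular matrices whose top-left entry is a (nonzero) square in `𝔽_p`. -/
def U₁ : Subgroup (GL (Fin 2) (ZMod p)) where
  carrier := {g | (g : M2) 1 0 = 0 ∧ IsSquare ((g : M2) 0 0)}
  one_mem' := by constructor <;> simp
  mul_mem' := by
    rintro a b ⟨ha1, ha2⟩ ⟨hb1, hb2⟩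
    refine ⟨?_, ?_⟩ <;> rw [mul_entry]
    · rw [ha1, hb1]; ring
    · rw [hb1]; simpa using ha2.mul hb2
  inv_mem' := by
    rintro a ⟨ha1, ha2⟩
    obtain ⟨hi1, hi2, -⟩ := inv_entries p a ha1
    exact ⟨hi1, by rw [hi2]; obtain ⟨c, hc⟩ := ha2; exact ⟨c⁻¹, by rw [← mul_inv, ← hc]⟩⟩

/-- The index-2 subgroup `U₂` of the Borel subgroup of `GL₂(𝔽_p)`: invertible upper
triangular matrices whose bottom-right entry is a (nonzero) square in `𝔽_p`. -/
def U₂ : Subgroup (GL (Fin 2) (ZMod p)) where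
  carrier := {g | (g : M2) 1 0 = 0 ∧ IsSquare ((g : M2) 1 1)}
  one_mem' := by constructor <;> simp
  mul_mem' := by
    rintro a b ⟨ha1, ha2⟩ ⟨hb1, hb2⟩
    refine ⟨?_, ?_⟩ <;> rw [mul_entry]
    · rw [ha1, hb1]; ring
    · rw [ha1]; simpa using ha2.mul hb2
  inv_mem' := by
    rintro a ⟨ha1, ha2⟩
    obtain ⟨hi1, -, hi3⟩ := inv_entries p a ha1
    exact ⟨hi1, by rw [hi3]; obtain ⟨c, hc⟩ := ha2; exact ⟨c⁻¹, by rw [← mul_inv, ← hc]⟩⟩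

end

/-!
With `B` the Borel subgroup and `η` the quadratic character, `ℂ[G/U₁] = Ind_B^G (1 ⊕ χ₁)` and
`ℂ[G/U₂] = Ind_B^G (1 ⊕ χ₂)` where `χ₁ b = η b₀₀` and `χ₂ b = η b₁₁`; the Weyl element swaps `χ₁`
and `χ₂`, so the two induced representations agree. Concretely, a left `H`-invariant kernel
`f : G → ℂ` gives the `G`-map `ℂ[G/H] → ℂ[G/K]`, `gH ↦ ∑ y, f (g⁻¹ y) • yK`, and composing two
such maps convolves their kernels. For `ψ g = η g₁₀`, the kernels `𝟙_B + ψ ∘ inv` (from `G/U₁` to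
`G/U₂`) and `|G ∖ B| 𝟙_B + |B| ψ` (back) convolve to `2 |B| |G ∖ B| 𝟙_{U₁}`: the cross terms
vanish because `ψ (diag(1, n) g) = -ψ g` for a non-square `n`, and `∑ z, ψ z ψ (z x)` vanishes
off `B` because right multiplication by `[[1, s], [0, 1]]` turns it into a character sum of an
affine function of `s`. So the first map is injective, and since `g ↦ (det g)⁻¹ g` maps `U₁` onto
`U₂`, both sides have the same dimension.
-/

open Finset

theorem Fintype.sum_eq_zero_of_equiv_neg {α M : Type*} [Fintype α] [AddCommGroup M]
    [IsAddTorsionFree M] (e : α ≃ α) {f : α → M} (h : ∀ a, f (e a) = -f a) : ∑ a, f a = 0 :=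
  self_eq_neg.mp <| by rw [← sum_neg_distrib, ← Equiv.sum_comp e f]; simp only [h]

section Hecke

variable {G : Type*} [Group G] [Fintype G] {k : Type*} [Field k] {H K : Subgroup G}
  {f f' : G → k}

variable (K) in
noncomputable def heckeOperator (f : G → k) (hf : ∀ h ∈ H, ∀ x, f (h * x) = f x) :
    (G ⧸ H →₀ k) →ₗ[k] (G ⧸ K →₀ k) :=
  Finsupp.linearCombination k fun q => q.liftOn'
    (fun g => ∑ y, f (g⁻¹ * y) • Finsupp.single (y : G ⧸ K) 1) fun a b hab => by
      refine sum_congr rfl fun y _ => ?_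
      rw [← hf _ (H.inv_mem (QuotientGroup.leftRel_apply.mp hab)) (a⁻¹ * y)]
      group

theorem heckeOperator_single (hf : ∀ h ∈ H, ∀ x, f (h * x) = f x) (g : G) (c : k) :
    heckeOperator K f hf (Finsupp.single (g : G ⧸ H) c) =
      c • ∑ y, f (g⁻¹ * y) • Finsupp.single (y : G ⧸ K) 1 :=
  Finsupp.linearCombination_single ..

theorem heckeOperator_mapDomain_smul (hf : ∀ h ∈ H, ∀ x, f (h * x) = f x) (g : G)
    (v : G ⧸ H →₀ k) :
    heckeOperator K f hf (v.mapDomain (g • ·)) = (heckeOperator K f hf v).mapDomain (g • ·) := by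
  induction v using Finsupp.induction_linear with
  | zero => simp
  | add v w hv hw => rw [Finsupp.mapDomain_add, map_add, map_add, hv, hw, Finsupp.mapDomain_add]
  | single q c =>
    induction q using QuotientGroup.induction_on with | H a => ?_
    rw [Finsupp.mapDomain_single, MulAction.Quotient.smul_mk, heckeOperator_single,
      heckeOperator_single, Finsupp.mapDomain_smul, Finsupp.mapDomain_finsetSum]
    congr 1
    refine Fintype.sum_equiv (Equiv.mulLeft g⁻¹) _ _ fun y => ?_
    simp [mul_assoc]

theorem sum_indicator_mul_indicator_inv_mul [DecidablePred (· ∈ H)] (x : G) :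
    ∑ y, (if y ∈ H then (1 : k) else 0) * (if y⁻¹ * x ∈ H then 1 else 0) =
      if x ∈ H then (Nat.card H : k) else 0 := by
  have h (y : G) : (if y ∈ H then (1 : k) else 0) * (if y⁻¹ * x ∈ H then 1 else 0) =
      if x ∈ H then (if y ∈ H then 1 else 0) else 0 := by
    by_cases hy : y ∈ H
    · simp [hy, H.mul_mem_cancel_left (H.inv_mem hy)]
    · simp [hy]
  simp only [h]
  split_ifs
  · rw [sum_boole, Nat.card_eq_fintype_card, Fintype.card_subtype]
  · exact sum_const_zero

theorem heckeOperator_comp_heckeOperator [DecidablePred (· ∈ H)]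
    (hf : ∀ h ∈ H, ∀ x, f (h * x) = f x) (hf' : ∀ h ∈ K, ∀ x, f' (h * x) = f' x) {c : k}
    (hconv : ∀ x, ∑ y, f y * f' (y⁻¹ * x) = if x ∈ H then c else 0) :
    (heckeOperator H f' hf').comp (heckeOperator K f hf) = (c * Nat.card H) • LinearMap.id := by
  refine Finsupp.lhom_ext fun q b => ?_
  induction q using QuotientGroup.induction_on with | H g => ?_
  have hsum : ∑ y, f (g⁻¹ * y) • heckeOperator H f' hf' (Finsupp.single (y : G ⧸ K) 1) =
      (c * Nat.card H) • Finsupp.single (g : G ⧸ H) 1 := by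
    calc _ = ∑ z, (∑ y, f (g⁻¹ * y) * f' (y⁻¹ * z)) • Finsupp.single (z : G ⧸ H) (1 : k) := by
          simp only [heckeOperator_single, smul_sum, smul_smul, sum_smul, one_mul]
          rw [sum_comm]
      _ = ∑ z, (if g⁻¹ * z ∈ H then c else 0) • Finsupp.single (z : G ⧸ H) (1 : k) := by
          refine sum_congr rfl fun z _ => ?_
          rw [← hconv, ← Equiv.sum_comp (Equiv.mulLeft g)]
          simp [mul_assoc]
      _ = ∑ z, if z ∈ H then c • Finsupp.single (g : G ⧸ H) (1 : k) else 0 := by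
          rw [← Equiv.sum_comp (Equiv.mulLeft g)]
          refine sum_congr rfl fun z _ => ?_
          by_cases hz : z ∈ H <;> simp [hz]
      _ = _ := by
          rw [sum_ite, sum_const_zero, add_zero, sum_const, mul_comm, mul_smul,
            Nat.cast_smul_eq_nsmul, Nat.card_eq_fintype_card, Fintype.card_subtype]
  rw [LinearMap.comp_apply, heckeOperator_single, map_smul, map_sum]
  simp_rw [map_smul]
  rw [hsum, LinearMap.smul_apply, LinearMap.id_apply, smul_smul, Finsupp.smul_single,
    Finsupp.smul_single, smul_eq_mul, smul_eq_mul, mul_one, mul_comm]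

theorem exists_linearEquiv_mapDomain_smul [CharZero k] [DecidablePred (· ∈ H)]
    (hindex : H.index = K.index) (hf : ∀ h ∈ H, ∀ x, f (h * x) = f x)
    (hf' : ∀ h ∈ K, ∀ x, f' (h * x) = f' x) {c : k} (hc : c ≠ 0)
    (hconv : ∀ x, ∑ y, f y * f' (y⁻¹ * x) = if x ∈ H then c else 0) :
    ∃ e : (G ⧸ H →₀ k) ≃ₗ[k] (G ⧸ K →₀ k),
      ∀ (g : G) v, e (v.mapDomain (g • ·)) = (e v).mapDomain (g • ·) := by
  have hinj : Function.Injective (heckeOperator K f hf) := by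
    refine .of_comp (f := heckeOperator H f' hf') ?_
    rw [← LinearMap.coe_comp, heckeOperator_comp_heckeOperator hf hf' hconv]
    exact smul_right_injective _ (mul_ne_zero hc (Nat.cast_ne_zero.mpr Nat.card_pos.ne'))
  have hdim : Module.finrank k (G ⧸ H →₀ k) = Module.finrank k (G ⧸ K →₀ k) := by
    classical
    rw [Module.finrank_finsupp_self, Module.finrank_finsupp_self, ← Nat.card_eq_fintype_card,
      ← Nat.card_eq_fintype_card]
    exact hindex
  exact ⟨LinearMap.linearEquivOfInjective _ hinj hdim, heckeOperator_mapDomain_smul hf⟩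

end Hecke

namespace GLTwo

open scoped Classical

section QuadraticCharacter

variable {F : Type*} [Field F] [Fintype F] [DecidableEq F]

noncomputable def η : MulChar F ℂ := (quadraticChar F).ringHomComp (Int.castRingHom ℂ)

theorem η_apply (a : F) : η a = (quadraticChar F a : ℂ) := rfl

theorem η_eq_one {a : F} (ha : a ≠ 0) (h : IsSquare a) : η a = 1 := by
  simp [η_apply, (quadraticChar_one_iff_isSquare ha).mpr h]

theorem η_eq_neg_one {a : F} (h : ¬IsSquare a) : η a = -1 := by
  simp [η_apply, quadraticChar_neg_one_iff_not_isSquare.mpr h]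

theorem η_mul_self {a : F} (ha : a ≠ 0) : η a * η a = 1 := by
  rw [← map_mul, η_eq_one (mul_ne_zero ha ha) (IsSquare.mul_self a)]

theorem sum_η_mul_add (hF : ringChar F ≠ 2) {a : F} (ha : a ≠ 0) (b : F) :
    ∑ s, η (a * s + b) = 0 := by
  rw [Fintype.sum_equiv ((Equiv.mulLeft₀ a ha).trans (Equiv.addRight b)) (fun s => η (a * s + b))
    η fun _ => rfl]
  simp only [η_apply, ← Int.cast_sum, quadraticChar_sum_zero hF, Int.cast_zero]

end QuadraticCharacter

variable {p : ℕ} [Fact p.Prime]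

local notation "M₂" => Matrix (Fin 2) (Fin 2) (ZMod p)
local notation "GL₂" => GL (Fin 2) (ZMod p)

theorem ringChar_ne_two (hp : Odd p) : ringChar (ZMod p) ≠ 2 := by
  rw [ZMod.ringChar_zmod_n]
  rintro rfl
  exact (Nat.not_odd_iff_even.mpr even_two) hp

variable (p) in
def borel : Subgroup GL₂ where
  carrier := {g | (g : M₂) 1 0 = 0}
  one_mem' := by simp
  mul_mem' {a b} (ha : (a : M₂) 1 0 = 0) (hb : (b : M₂) 1 0 = 0) := by
    show _ = 0
    rw [mul_entry, ha, hb]; ring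
  inv_mem' {a} ha := (inv_entries p a ha).1

local notation "c₁" => (Nat.card (borel p) : ℂ)
local notation "c₂" => ((#(univ.filter fun z : GL₂ => z ∉ borel p) : ℕ) : ℂ)

theorem mem_borel {g : GL₂} : g ∈ borel p ↔ (g : M₂) 1 0 = 0 := Iff.rfl

theorem diag_ne_zero_of_mem_borel {b : GL₂} (hb : b ∈ borel p) :
    (b : M₂) 0 0 ≠ 0 ∧ (b : M₂) 1 1 ≠ 0 := by
  have hdet : (b : M₂).det = (b : M₂) 0 0 * (b : M₂) 1 1 := by
    rw [det_fin_two, mem_borel.mp hb]; ring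
  simpa [hdet] using GeneralLinearGroup.det_ne_zero b

def upperTriangular (a b d : ZMod p) (ha : a ≠ 0) (hd : d ≠ 0) : GL₂ :=
  .mkOfDetNeZero !![a, b; 0, d] (by simp [ha, hd])

@[simp]
theorem coe_upperTriangular (a b d : ZMod p) (ha : a ≠ 0) (hd : d ≠ 0) :
    (upperTriangular a b d ha hd : M₂) = !![a, b; 0, d] := rfl

theorem upperTriangular_mem_borel (a b d : ZMod p) (ha : a ≠ 0) (hd : d ≠ 0) :
    upperTriangular a b d ha hd ∈ borel p := rfl

noncomputable def ηLowerLeft (g : GL₂) : ℂ := η ((g : M₂) 1 0)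

theorem ηLowerLeft_mul_right_of_mem_borel (g : GL₂) {b : GL₂} (hb : b ∈ borel p) :
    ηLowerLeft (g * b) = η ((b : M₂) 0 0) * ηLowerLeft g := by
  rw [ηLowerLeft, ηLowerLeft, mul_entry, mem_borel.mp hb, mul_zero, add_zero, map_mul, mul_comm]

theorem ηLowerLeft_mul_left_of_mem_borel {b : GL₂} (hb : b ∈ borel p) (g : GL₂) :
    ηLowerLeft (b * g) = η ((b : M₂) 1 1) * ηLowerLeft g := by
  rw [ηLowerLeft, ηLowerLeft, mul_entry, mem_borel.mp hb, zero_mul, zero_add, map_mul]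

theorem ηLowerLeft_eq_zero {g : GL₂} (hg : g ∈ borel p) : ηLowerLeft g = 0 := by
  rw [ηLowerLeft, mem_borel.mp hg, MulChar.map_zero]

theorem ηLowerLeft_mul_self {g : GL₂} (hg : g ∉ borel p) : ηLowerLeft g * ηLowerLeft g = 1 :=
  η_mul_self hg

theorem exists_mem_borel_η_eq_neg_one (hp : Odd p) :
    ∃ ν : GL₂, ν ∈ borel p ∧ η ((ν : M₂) 1 1) = -1 := by
  obtain ⟨n, hn⟩ := FiniteField.exists_nonsquare (ringChar_ne_two hp)
  have hn0 : n ≠ 0 := by rintro rfl; exact hn .zero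
  exact ⟨upperTriangular 1 0 n one_ne_zero hn0, upperTriangular_mem_borel .., η_eq_neg_one hn⟩

theorem sum_borel_mul_ηLowerLeft_inv_mul (hp : Odd p) (x : GL₂) :
    ∑ y, (if y ∈ borel p then 1 else 0) * ηLowerLeft (y⁻¹ * x) = 0 := by
  obtain ⟨ν, hν, hην⟩ := exists_mem_borel_η_eq_neg_one hp
  refine Fintype.sum_eq_zero_of_equiv_neg (Equiv.mulRight ν⁻¹) fun y => ?_
  simp only [Equiv.coe_mulRight, _root_.mul_inv_rev, inv_inv, mul_assoc,
    (borel p).mul_mem_cancel_right ((borel p).inv_mem hν), ηLowerLeft_mul_left_of_mem_borel hν,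
    hην]
  ring

theorem sum_ηLowerLeft_inv_mul_borel (hp : Odd p) (x : GL₂) :
    ∑ y, ηLowerLeft y⁻¹ * (if y⁻¹ * x ∈ borel p then 1 else 0) = 0 := by
  obtain ⟨ν, hν, hην⟩ := exists_mem_borel_η_eq_neg_one hp
  refine Fintype.sum_eq_zero_of_equiv_neg (Equiv.mulRight ν⁻¹) fun y => ?_
  simp only [Equiv.coe_mulRight, _root_.mul_inv_rev, inv_inv, mul_assoc,
    (borel p).mul_mem_cancel_left hν, ηLowerLeft_mul_left_of_mem_borel hν, hην]
  ring

theorem sum_ηLowerLeft_mul_ηLowerLeft_mul_of_mem {x : GL₂} (hx : x ∈ borel p) :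
    ∑ z, ηLowerLeft z * ηLowerLeft (z * x) = c₂ * η ((x : M₂) 0 0) := by
  have h (z : GL₂) : ηLowerLeft z * ηLowerLeft (z * x) =
      (if z ∉ borel p then 1 else 0) * η ((x : M₂) 0 0) := by
    rw [ηLowerLeft_mul_right_of_mem_borel z hx, mul_left_comm]
    by_cases hz : z ∈ borel p
    · simp [hz, ηLowerLeft_eq_zero hz]
    · simp [hz, ηLowerLeft_mul_self hz]
  simp only [h, ← sum_mul, sum_boole]

theorem sum_ηLowerLeft_mul_ηLowerLeft_mul_of_notMem (hp : Odd p) {x : GL₂}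
    (hx : x ∉ borel p) : ∑ z, ηLowerLeft z * ηLowerLeft (z * x) = 0 := by
  set S := ∑ z, ηLowerLeft z * ηLowerLeft (z * x)
  let t (s : ZMod p) : GL₂ := upperTriangular 1 s 1 one_ne_zero one_ne_zero
  have hS (s : ZMod p) : ∑ z, ηLowerLeft z * ηLowerLeft (z * t s * x) = S := by
    calc _ = ∑ z, ηLowerLeft (z * t s) * ηLowerLeft (z * t s * x) := by
          refine sum_congr rfl fun z _ => ?_
          simp [ηLowerLeft_mul_right_of_mem_borel _ (upperTriangular_mem_borel ..), t]
      _ = S := Equiv.sum_comp (Equiv.mulRight (t s)) fun z => ηLowerLeft z * ηLowerLeft (z * x)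
  have hinner (z : GL₂) : ηLowerLeft z * ∑ s, ηLowerLeft (z * t s * x) = 0 := by
    by_cases hz : z ∈ borel p
    · rw [ηLowerLeft_eq_zero hz, zero_mul]
    have h (s : ZMod p) : ηLowerLeft (z * t s * x) = η (((z : M₂) 1 0 * (x : M₂) 1 0) * s +
        ((z : M₂) 1 0 * (x : M₂) 0 0 + (z : M₂) 1 1 * (x : M₂) 1 0)) := by
      simp only [ηLowerLeft, mul_entry]
      simp [t]
      ring_nf
    rw [sum_congr rfl fun s _ => h s, sum_η_mul_add (ringChar_ne_two hp) (mul_ne_zero hz hx),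
      mul_zero]
  have hpS : (p : ℂ) * S = 0 := calc
    (p : ℂ) * S = ∑ s : ZMod p, ∑ z, ηLowerLeft z * ηLowerLeft (z * t s * x) := by
      simp [hS, ZMod.card]
    _ = 0 := by
      simp_rw [mul_sum] at hinner
      rw [sum_comm]
      exact sum_eq_zero fun z _ => hinner z
  exact (mul_eq_zero.mp hpS).resolve_left (Nat.cast_ne_zero.mpr (Fact.out : p.Prime).ne_zero)

theorem two_mul_card_borel_mul_card_compl_ne_zero : 2 * c₁ * c₂ ≠ 0 := by
  have hc₂ : 0 < #(univ.filter fun z : GL₂ => z ∉ borel p) :=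
    card_pos.mpr ⟨.mkOfDetNeZero !![0, 1; 1, 0] (by simp), by simp [mem_borel]⟩
  exact_mod_cast (Nat.mul_pos (Nat.mul_pos two_pos Nat.card_pos) hc₂).ne'

noncomputable def kernel₁₂ (g : GL₂) : ℂ := (if g ∈ borel p then 1 else 0) + ηLowerLeft g⁻¹

noncomputable def kernel₂₁ (g : GL₂) : ℂ :=
  c₂ * (if g ∈ borel p then 1 else 0) + c₁ * ηLowerLeft g

theorem kernel₁₂_mul_of_mem_U₁ (u : GL₂) (hu : u ∈ U₁ p) (x : GL₂) :
    kernel₁₂ (u * x) = kernel₁₂ x := by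
  obtain ⟨hu_borel, hu_sq⟩ := (U₁ p).inv_mem hu
  rw [kernel₁₂, kernel₁₂, _root_.mul_inv_rev, ηLowerLeft_mul_right_of_mem_borel _ hu_borel,
    η_eq_one (diag_ne_zero_of_mem_borel hu_borel).1 hu_sq, one_mul,
    (borel p).mul_mem_cancel_left (hu.1 : u ∈ borel p)]

theorem kernel₂₁_mul_of_mem_U₂ (u : GL₂) (hu : u ∈ U₂ p) (x : GL₂) :
    kernel₂₁ (u * x) = kernel₂₁ x := by
  obtain ⟨hu_borel, hu_sq⟩ := hu
  rw [kernel₂₁, kernel₂₁, ηLowerLeft_mul_left_of_mem_borel hu_borel,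
    η_eq_one (diag_ne_zero_of_mem_borel hu_borel).2 hu_sq, one_mul,
    (borel p).mul_mem_cancel_left hu_borel]

theorem sum_kernel₁₂_mul_kernel₂₁ (hp : Odd p) (x : GL₂) :
    ∑ y, kernel₁₂ y * kernel₂₁ (y⁻¹ * x) = if x ∈ U₁ p then 2 * c₁ * c₂ else 0 := by
  have hexpand (y : GL₂) : kernel₁₂ y * kernel₂₁ (y⁻¹ * x) =
      c₂ * ((if y ∈ borel p then 1 else 0) * (if y⁻¹ * x ∈ borel p then 1 else 0)) +
      c₁ * ((if y ∈ borel p then 1 else 0) * ηLowerLeft (y⁻¹ * x)) +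
      c₂ * (ηLowerLeft y⁻¹ * (if y⁻¹ * x ∈ borel p then 1 else 0)) +
      c₁ * (ηLowerLeft y⁻¹ * ηLowerLeft (y⁻¹ * x)) := by
    rw [kernel₁₂, kernel₂₁]; ring
  have hinv : ∑ y, ηLowerLeft y⁻¹ * ηLowerLeft (y⁻¹ * x) =
      ∑ z, ηLowerLeft z * ηLowerLeft (z * x) :=
    Equiv.sum_comp (Equiv.inv _) fun z => ηLowerLeft z * ηLowerLeft (z * x)
  simp only [hexpand, sum_add_distrib, ← mul_sum, sum_indicator_mul_indicator_inv_mul,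
    sum_borel_mul_ηLowerLeft_inv_mul hp, sum_ηLowerLeft_inv_mul_borel hp, hinv]
  by_cases hx : x ∈ borel p
  · rw [sum_ηLowerLeft_mul_ηLowerLeft_mul_of_mem hx]
    by_cases hsq : IsSquare ((x : M₂) 0 0)
    · simp [hx, η_eq_one (diag_ne_zero_of_mem_borel hx).1 hsq, show x ∈ U₁ p from ⟨hx, hsq⟩]
      ring
    · simp [hx, η_eq_neg_one hsq, show x ∉ U₁ p from fun h => hsq h.2]
      ring
  · simp [hx, sum_ηLowerLeft_mul_ηLowerLeft_mul_of_notMem hp hx,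
      show x ∉ U₁ p from fun h => hx h.1]

def detInvMul (g : GL₂) : GL₂ :=
  GeneralLinearGroup.scalar (Fin 2) (GeneralLinearGroup.det g)⁻¹ * g

theorem coe_detInvMul (g : GL₂) : (detInvMul g : M₂) = ((g : M₂).det)⁻¹ • (g : M₂) := by
  rw [detInvMul, Units.val_mul, GeneralLinearGroup.coe_scalar, Units.val_inv_eq_inv_val,
    GeneralLinearGroup.val_det_apply, Matrix.scalar_apply, smul_eq_diagonal_mul]

theorem detInvMul_detInvMul (g : GL₂) : detInvMul (detInvMul g) = g := by
  have hdet := GeneralLinearGroup.det_ne_zero g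
  ext i j
  simp only [coe_detInvMul, det_smul, Matrix.smul_apply, smul_eq_mul, Fintype.card_fin]
  field_simp

theorem detInvMul_mem_U₂_iff {g : GL₂} : detInvMul g ∈ U₂ p ↔ g ∈ U₁ p := by
  have hdet : (g : M₂).det ≠ 0 := GeneralLinearGroup.det_ne_zero g
  show (detInvMul g : M₂) 1 0 = 0 ∧ IsSquare ((detInvMul g : M₂) 1 1) ↔
    (g : M₂) 1 0 = 0 ∧ IsSquare ((g : M₂) 0 0)
  simp only [coe_detInvMul, Matrix.smul_apply, smul_eq_mul, mul_eq_zero, inv_eq_zero, hdet,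
    false_or, and_congr_right_iff]
  intro h10
  have h11 : (g : M₂) 1 1 ≠ 0 := fun h => hdet (by rw [det_fin_two, h10, h]; ring)
  rw [det_fin_two, h10, mul_zero, sub_zero, mul_inv, mul_assoc, inv_mul_cancel₀ h11, mul_one,
    isSquare_inv]

theorem index_U₁_eq_index_U₂ : (U₁ p).index = (U₂ p).index := by
  have hcard : Nat.card (U₁ p) = Nat.card (U₂ p) := Nat.card_congr <|
    (Function.Involutive.toPerm detInvMul detInvMul_detInvMul).subtypeEquiv
      fun _ => detInvMul_mem_U₂_iff.symm
  have h₁ := (U₁ p).index_mul_card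
  have h₂ := (U₂ p).index_mul_card
  rw [hcard] at h₁
  exact Nat.eq_of_mul_eq_mul_right Nat.card_pos (h₁.trans h₂.symm)

end GLTwo

/-- For `p` an odd prime and `G = GL₂(𝔽_p)`, the complex permutation representations
`ℂ[G/U₁]` and `ℂ[G/U₂]` are isomorphic as `G`-representations, where `U₁` (resp. `U₂`)
is the index-2 subgroup of the Borel with square top-left (resp. bottom-right) entry. -/
theorem stmt6 (p : ℕ) [Fact p.Prime] (hp : Odd p) :
    ∃ e : (GL (Fin 2) (ZMod p) ⧸ U₁ p →₀ ℂ) ≃ₗ[ℂ] (GL (Fin 2) (ZMod p) ⧸ U₂ p →₀ ℂ),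
      ∀ (g : GL (Fin 2) (ZMod p)) (v : GL (Fin 2) (ZMod p) ⧸ U₁ p →₀ ℂ),
        e ((Representation.ofMulAction ℂ (GL (Fin 2) (ZMod p)) (GL (Fin 2) (ZMod p) ⧸ U₁ p) g
          ((MonoidAlgebra.coeffLinearEquiv ℂ).symm v)).coeff) =
          (Representation.ofMulAction ℂ (GL (Fin 2) (ZMod p)) (GL (Fin 2) (ZMod p) ⧸ U₂ p) g
            ((MonoidAlgebra.coeffLinearEquiv ℂ).symm (e v))).coeff := by
  classical
  exact exists_linearEquiv_mapDomain_smul GLTwo.index_U₁_eq_index_U₂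
    GLTwo.kernel₁₂_mul_of_mem_U₁ GLTwo.kernel₂₁_mul_of_mem_U₂
    GLTwo.two_mul_card_borel_mul_card_compl_ne_zero (GLTwo.sum_kernel₁₂_mul_kernel₂₁ hp)
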